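/- Let Ω be a locally compact Hausdorff space, Γ a nondegenerate Banach module over C₀(Ω) and N a U₀(Ω)-valued norm on Γ. Then for every s ∈ Γ the support of s equals the closure of the set where N(s) does not vanish: supp(s) = closure({x ∈ Ω : N(s)(x) ≠ 0}). -/

import Mathlib

open scoped ZeroAtInfty

noncomputable section

variable {𝕜 : Type*} [RCLike 𝕜] {Ω : Type*} [TopologicalSpace Ω]

/-- A Banach module structure over `C₀(Ω, 𝕜)` on a `𝕜`-Banach space `Γ`. -/
structure C0Module (𝕜 : Type*) [RCLike 𝕜] (Ω : Type*) [TopologicalSpace Ω]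
    (Γ : Type*) [NormedAddCommGroup Γ] [NormedSpace 𝕜 Γ] where
  smul : C₀(Ω, 𝕜) →L[𝕜] Γ →L[𝕜] Γ
  mul_smul : ∀ (f g : C₀(Ω, 𝕜)) (s : Γ), smul (f * g) s = smul f (smul g s)
  norm_smul_le : ∀ (f : C₀(Ω, 𝕜)) (s : Γ), ‖smul f s‖ ≤ ‖f‖ * ‖s‖

variable {Γ : Type*} [NormedAddCommGroup Γ] [NormedSpace 𝕜 Γ]

/-- Nondegeneracy of a Banach module over `C₀(Ω, 𝕜)`. -/
def C0Module.Nondegenerate (M : C0Module 𝕜 Ω Γ) : Prop :=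
  Dense (Submodule.span 𝕜 {x : Γ | ∃ (f : C₀(Ω, 𝕜)) (s : Γ), M.smul f s = x} : Set Γ)

/-- The inclusion `C₀(Ω, ℝ) ⊆ C₀(Ω, 𝕜)`. -/
def ofRealC0 (𝕜 : Type*) [RCLike 𝕜] {Ω : Type*} [TopologicalSpace Ω] (f : C₀(Ω, ℝ)) :
    C₀(Ω, 𝕜) where
  toFun := fun x => (f x : 𝕜)
  continuous_toFun := RCLike.continuous_ofReal.comp f.continuous
  zero_at_infty' := by
    have h2 : Filter.Tendsto (fun r : ℝ => (r : 𝕜)) (nhds 0) (nhds 0) := by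
      simpa using (RCLike.continuous_ofReal (K := 𝕜)).tendsto 0
    exact h2.comp f.zero_at_infty'

/-- The pointwise maximum of two functions in `C₀(Ω, ℝ)`. -/
def supC0 (f g : C₀(Ω, ℝ)) : C₀(Ω, ℝ) where
  toFun := fun x => max (f x) (g x)
  continuous_toFun := f.continuous.max g.continuous
  zero_at_infty' := by simpa using f.zero_at_infty'.max g.zero_at_infty'

/-- The AM-identity: `‖(f₁ ⊔ f₂) • s‖ = max ‖f₁ • s‖ ‖f₂ • s‖` for nonnegative real-valued
`f₁, f₂ ∈ C₀(Ω, ℝ)`. -/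
def C0Module.IsAM (M : C0Module 𝕜 Ω Γ) : Prop :=
  ∀ (f₁ f₂ : C₀(Ω, ℝ)), (∀ x, 0 ≤ f₁ x) → (∀ x, 0 ≤ f₂ x) → ∀ s : Γ,
    ‖M.smul (ofRealC0 𝕜 (supC0 f₁ f₂)) s‖ =
      max ‖M.smul (ofRealC0 𝕜 f₁) s‖ ‖M.smul (ofRealC0 𝕜 f₂) s‖

/-- A `U₀(Ω)`-valued norm on a Banach module `Γ` over `C₀(Ω, 𝕜)`. -/
structure IsU0Norm (M : C0Module 𝕜 Ω Γ) (N : Γ → Ω → ℝ) : Prop where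
  nonneg : ∀ (s : Γ) (x : Ω), 0 ≤ N s x
  upperSemicontinuous : ∀ s : Γ, UpperSemicontinuous (N s)
  zero_at_infty : ∀ s : Γ, ∀ ε > 0, ∃ K : Set Ω, IsCompact K ∧ ∀ x ∉ K, N s x ≤ ε
  sup_eq_norm : ∀ s : Γ, (⨆ x : Ω, N s x) = ‖s‖
  smul_eq : ∀ (f : C₀(Ω, 𝕜)) (s : Γ) (x : Ω), N (M.smul f s) x = ‖f x‖ * N s x
  subadd : ∀ (s₁ s₂ : Γ) (x : Ω), N (s₁ + s₂) x ≤ N s₁ x + N s₂ x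

/-- The canonical candidate for the `U₀(Ω)`-valued norm. -/
def normFormula (M : C0Module 𝕜 Ω Γ) (s : Γ) (x : Ω) : ℝ :=
  sInf {r : ℝ | ∃ f : C₀(Ω, ℝ), (∀ y, 0 ≤ f y) ∧ f x = 1 ∧ r = ‖M.smul (ofRealC0 𝕜 f) s‖}


/-- The support of `s` in `Ω`. -/
def C0Module.support (M : C0Module 𝕜 Ω Γ) (s : Γ) : Set Ω :=
  {x : Ω | ∀ f : C₀(Ω, 𝕜), f x ≠ 0 → M.smul f s ≠ 0}

theorem exists_zeroAtInfty_ne_zero_eqOn_zero [RegularSpace Ω] [LocallyCompactSpace Ω]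
    {U : Set Ω} (hU : IsOpen U) {x : Ω} (hx : x ∈ U) :
    ∃ g : C₀(Ω, 𝕜), g x ≠ 0 ∧ Set.EqOn g 0 Uᶜ := by
  obtain ⟨f, hf_one, hf_zero, hf_compact, -⟩ :=
    exists_continuous_one_zero_of_isCompact isCompact_singleton hU.isClosed_compl
      (Set.disjoint_singleton_left.mpr (Set.not_notMem.mpr hx))
  refine ⟨ofRealC0 𝕜 ⟨f, hf_compact.is_zero_at_infty⟩, ?_, fun y hy => ?_⟩
  · change ((f x : ℝ) : 𝕜) ≠ 0
    simp [hf_one rfl]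
  · change ((f y : ℝ) : 𝕜) = 0
    simp [hf_zero hy]

namespace C0Module

variable (M : C0Module 𝕜 Ω Γ)

theorem support_eq_biInter (s : Γ) :
    M.support s = ⋂ f ∈ {f : C₀(Ω, 𝕜) | M.smul f s = 0}, {x | f x = 0} := by
  ext x
  simp only [support, Set.mem_iInter, Set.mem_ofPred_eq]
  exact forall_congr' fun f => not_imp_not

theorem isClosed_support (s : Γ) : IsClosed (M.support s) := by
  rw [support_eq_biInter]
  exact isClosed_biInter fun f _ => isClosed_eq f.continuous continuous_const

end C0Module

namespace IsU0Norm

variable {M : C0Module 𝕜 Ω Γ} {N : Γ → Ω → ℝ}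

theorem apply_zero (hN : IsU0Norm M N) (x : Ω) : N 0 x = 0 := by
  simpa using hN.smul_eq 0 0 x

theorem eq_zero_of_forall_eq_zero (hN : IsU0Norm M N) {s : Γ} (hs : ∀ x, N s x = 0) :
    s = 0 := by
  rw [← norm_eq_zero, ← hN.sup_eq_norm, funext hs, Real.iSup_const_zero]

theorem setOf_ne_zero_subset_support (hN : IsU0Norm M N) (s : Γ) :
    {x | N s x ≠ 0} ⊆ M.support s := by
  intro x hx f hfx hfs
  have h := hN.smul_eq f s x
  rw [hfs, hN.apply_zero] at h
  exact mul_ne_zero (norm_ne_zero_iff.mpr hfx) hx h.symm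

/-- A function of `C₀(Ω)` that is nonzero at `x` but vanishes wherever `N s` does not
annihilates `s`, so `x` lies outside the support. -/
theorem support_subset_closure [RegularSpace Ω] [LocallyCompactSpace Ω]
    (hN : IsU0Norm M N) (s : Γ) : M.support s ⊆ closure {x | N s x ≠ 0} := by
  intro x hx
  by_contra hx_closure
  obtain ⟨g, hgx, hg_zero⟩ :=
    exists_zeroAtInfty_ne_zero_eqOn_zero (𝕜 := 𝕜) isClosed_closure.isOpen_compl hx_closure
  refine hx g hgx (hN.eq_zero_of_forall_eq_zero fun y => ?_)
  rw [hN.smul_eq]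
  by_cases hy : y ∈ closure {x | N s x ≠ 0}
  · simp [hg_zero (Set.not_notMem.mpr hy)]
  · have : N s y = 0 := not_not.mp fun h => hy (subset_closure h)
    simp [this]

end IsU0Norm

theorem support_eq_closure_u0Norm_ne_zero_general
    [LocallyCompactSpace Ω] [T2Space Ω]
    (M : C0Module 𝕜 Ω Γ)
    (N : Γ → Ω → ℝ) (hN : IsU0Norm M N) (s : Γ) :
    M.support s = closure {x : Ω | N s x ≠ 0} :=
  (hN.support_subset_closure s).antisymm
    (closure_minimal (hN.setOf_ne_zero_subset_support s) (M.isClosed_support s))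

/-- For a `U₀(Ω)`-normed module, the support of `s` equals the closure of
the set where the vector-valued norm of `s` does not vanish. -/
theorem support_eq_closure_u0Norm_ne_zero
    [LocallyCompactSpace Ω] [T2Space Ω] [CompleteSpace Γ]
    (M : C0Module 𝕜 Ω Γ) (hM : M.Nondegenerate)
    (N : Γ → Ω → ℝ) (hN : IsU0Norm M N) (s : Γ) :
    M.support s = closure {x : Ω | N s x ≠ 0} :=
  support_eq_closure_u0Norm_ne_zero_general M N hN s

end
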